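/- arXiv:2306.17308 — 4 statements merged into one kernel-verified Lean document; each statement's English description precedes it below -/
import Mathlib

section
/- If x_k minimizes ‖R(A)b − x‖_{S} over x in the Krylov space K_k(A,b), where S = D(A)*D(A), then ‖R(A)b − x_k‖_2 / ‖b‖_2 ≤ κ(S)^{1/2} · min over polynomials p of degree ≤ k−1 of ‖R(A) − p(A)‖_2, where κ(S) = ‖S‖_2 ‖S^{-1}‖_2. -/
/-- The Krylov space `K_k(A,b) = span{b, Ab, ..., A^{k-1}b}`. -/
noncomputable def Krylov (n : ℕ) (A : Matrix (Fin n) (Fin n) ℂ) (b : EuclideanSpace ℂ (Fin n))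
    (k : ℕ) : Submodule ℂ (EuclideanSpace ℂ (Fin n)) :=
  Submodule.span ℂ {x | ∃ i < k, x = (A ^ i).mulVec b}

/-- The `S`-norm `‖v‖_S = ⟨v, S v⟩^{1/2}` for a matrix `S`. -/
noncomputable def Snorm (n : ℕ) (S : Matrix (Fin n) (Fin n) ℂ)
    (v : EuclideanSpace ℂ (Fin n)) : ℝ :=
  Real.sqrt (@inner ℂ (EuclideanSpace ℂ (Fin n)) _ v (WithLp.toLp 2 (S.mulVec v))).re

/-- The operator 2-norm of a matrix. -/
noncomputable def opNorm {m : ℕ} (M : Matrix (Fin m) (Fin m) ℂ) : ℝ :=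
  ‖Matrix.toEuclideanCLM (𝕜 := ℂ) M‖

/-!
Put `M = D(A)`, so that `‖v‖_S = ‖M v‖`, and `e = R(A) b - x_k`. For `deg p < k` the vector
`p(A) b` lies in the Krylov space, so minimality gives
`‖M e‖ ≤ ‖M (R(A) - p(A)) b‖ ≤ ‖M‖ ‖R(A) - p(A)‖ ‖b‖`, while `‖e‖ ≤ ‖M⁻¹‖ ‖M e‖`.
Since `(MᴴM)⁻¹ = M⁻¹ M⁻¹ᴴ`, the C*-identity `‖XᴴX‖ = ‖XXᴴ‖ = ‖X‖²` turns `κ(S)^{1/2}` into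
`‖M‖ ‖M⁻¹‖`.
-/

section

open Matrix

variable {n : ℕ}

lemma Snorm_conjTranspose_mul_self (M : Matrix (Fin n) (Fin n) ℂ) (v : EuclideanSpace ℂ (Fin n)) :
    Snorm n (Mᴴ * M) v = ‖toEuclideanCLM (𝕜 := ℂ) M v‖ := by
  have hS : WithLp.toLp 2 ((Mᴴ * M) *ᵥ v) =
      (toEuclideanCLM (𝕜 := ℂ) M).adjoint (toEuclideanCLM (𝕜 := ℂ) M v) := by
    change toEuclideanCLM (𝕜 := ℂ) (Mᴴ * M) v = _
    rw [← star_eq_conjTranspose, map_mul, map_star, ContinuousLinearMap.star_eq_adjoint]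
    rfl
  rw [Snorm, hS, ContinuousLinearMap.adjoint_inner_right, inner_self_eq_norm_sq_to_K]
  norm_cast
  exact Real.sqrt_sq (norm_nonneg _)

lemma opNorm_conjTranspose_mul_self (M : Matrix (Fin n) (Fin n) ℂ) :
    opNorm (Mᴴ * M) = opNorm M * opNorm M := by
  rw [opNorm, ← star_eq_conjTranspose, map_mul, map_star, ContinuousLinearMap.star_eq_adjoint]
  exact ContinuousLinearMap.norm_adjoint_comp_self _

lemma opNorm_conjTranspose (M : Matrix (Fin n) (Fin n) ℂ) : opNorm Mᴴ = opNorm M := by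
  rw [opNorm, ← star_eq_conjTranspose, map_star, ContinuousLinearMap.star_eq_adjoint,
    LinearIsometryEquiv.norm_map, opNorm]

lemma opNorm_mul_conjTranspose_self (M : Matrix (Fin n) (Fin n) ℂ) :
    opNorm (M * Mᴴ) = opNorm M * opNorm M := by
  simpa only [conjTranspose_conjTranspose, opNorm_conjTranspose] using
    opNorm_conjTranspose_mul_self Mᴴ

lemma sqrt_opNorm_conjTranspose_mul_self_mul_opNorm_inv (M : Matrix (Fin n) (Fin n) ℂ) :
    √(opNorm (Mᴴ * M) * opNorm (Mᴴ * M)⁻¹) = opNorm M * opNorm M⁻¹ := by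
  rw [Matrix.mul_inv_rev, ← conjTranspose_nonsing_inv, opNorm_conjTranspose_mul_self,
    opNorm_mul_conjTranspose_self, mul_mul_mul_comm, Real.sqrt_mul_self]
  exact mul_nonneg (norm_nonneg _) (norm_nonneg _)

lemma norm_le_opNorm_inv_mul_norm_toEuclideanCLM {M : Matrix (Fin n) (Fin n) ℂ} (hM : IsUnit M)
    (v : EuclideanSpace ℂ (Fin n)) : ‖v‖ ≤ opNorm M⁻¹ * ‖toEuclideanCLM (𝕜 := ℂ) M v‖ := by
  have hv : toEuclideanCLM (𝕜 := ℂ) M⁻¹ (toEuclideanCLM (𝕜 := ℂ) M v) = v := by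
    rw [← mul_apply_eq_comp, ← map_mul,
      nonsing_inv_mul _ ((isUnit_iff_isUnit_det M).1 hM), map_one, one_apply_eq_self]
  conv_lhs => rw [← hv]
  exact ContinuousLinearMap.le_opNorm _ _

lemma toEuclideanCLM_aeval_apply_mem_Krylov {k : ℕ} (A : Matrix (Fin n) (Fin n) ℂ)
    (b : EuclideanSpace ℂ (Fin n)) {p : Polynomial ℂ} (hp : p.degree < k) :
    toEuclideanCLM (𝕜 := ℂ) (Polynomial.aeval A p) b ∈ Krylov n A b k := by
  rw [Polynomial.aeval_eq_sum_range, map_sum, _root_.sum_apply]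
  refine Submodule.sum_mem _ fun i _ => ?_
  by_cases hi : p.coeff i = 0
  · simp [hi]
  rw [map_smul, _root_.smul_apply]
  have hik : i < k := by
    exact_mod_cast (Polynomial.le_degree_of_mem_supp i (Polynomial.mem_support_iff.2 hi)).trans_lt hp
  exact Submodule.smul_mem _ _ (Submodule.subset_span ⟨i, hik, rfl⟩)

end

open Polynomial Matrix in
theorem stmt6_general (n k : ℕ) (A : Matrix (Fin n) (Fin n) ℂ) (D N : Polynomial ℂ)
    (hD : IsUnit (aeval A D)) (b : EuclideanSpace ℂ (Fin n))
    (xk : EuclideanSpace ℂ (Fin n))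
    (hmin : ∀ x ∈ Krylov n A b k,
      Snorm n ((aeval A D)ᴴ * aeval A D) ((WithLp.equiv 2 (Fin n → ℂ)).symm (((aeval A D)⁻¹ * aeval A N).mulVec b) - xk)
      ≤ Snorm n ((aeval A D)ᴴ * aeval A D) ((WithLp.equiv 2 (Fin n → ℂ)).symm (((aeval A D)⁻¹ * aeval A N).mulVec b) - x)) :
    ∀ p : Polynomial ℂ, p.degree < (k : WithBot ℕ) →
      ‖((WithLp.equiv 2 (Fin n → ℂ)).symm (((aeval A D)⁻¹ * aeval A N).mulVec b) - xk : EuclideanSpace ℂ (Fin n))‖ / ‖b‖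
      ≤ Real.sqrt (opNorm ((aeval A D)ᴴ * aeval A D) * opNorm (((aeval A D)ᴴ * aeval A D)⁻¹))
        * opNorm ((aeval A D)⁻¹ * aeval A N - aeval A p) := by
  intro p hp
  set M := aeval A D
  set R := M⁻¹ * aeval A N
  have hmin_p : ‖toEuclideanCLM (𝕜 := ℂ) M (toEuclideanCLM (𝕜 := ℂ) R b - xk)‖ ≤
      ‖toEuclideanCLM (𝕜 := ℂ) M (toEuclideanCLM (𝕜 := ℂ) (R - aeval A p) b)‖ := by
    rw [map_sub (toEuclideanCLM (𝕜 := ℂ)) R, _root_.sub_apply, ← Snorm_conjTranspose_mul_self,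
      ← Snorm_conjTranspose_mul_self]
    exact hmin _ (toEuclideanCLM_aeval_apply_mem_Krylov A b hp)
  refine div_le_of_le_mul₀ (norm_nonneg b) (mul_nonneg (Real.sqrt_nonneg _) (norm_nonneg _)) ?_
  rw [sqrt_opNorm_conjTranspose_mul_self_mul_opNorm_inv]
  calc ‖toEuclideanCLM (𝕜 := ℂ) R b - xk‖
      ≤ opNorm M⁻¹ * ‖toEuclideanCLM (𝕜 := ℂ) M (toEuclideanCLM (𝕜 := ℂ) R b - xk)‖ :=
        norm_le_opNorm_inv_mul_norm_toEuclideanCLM hD _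
    _ ≤ opNorm M⁻¹ * (opNorm M * (opNorm (R - aeval A p) * ‖b‖)) := by
        refine mul_le_mul_of_nonneg_left (hmin_p.trans ?_) (norm_nonneg _)
        exact (ContinuousLinearMap.le_opNorm _ _).trans
          (mul_le_mul_of_nonneg_left (ContinuousLinearMap.le_opNorm _ _) (norm_nonneg _))
    _ = opNorm M * opNorm M⁻¹ * opNorm (R - aeval A p) * ‖b‖ := by ring

open Polynomial Matrix in
/-- If `x_k` minimizes `‖R(A)b − x‖_S` over the Krylov space, `S = D(A)ᴴD(A)`, then
`‖R(A)b − x_k‖₂/‖b‖₂ ≤ κ(S)^{1/2} · min_{deg p ≤ k-1} ‖R(A) − p(A)‖₂`. -/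
theorem stmt6 (n k : ℕ) (A : Matrix (Fin n) (Fin n) ℂ) (D N : Polynomial ℂ)
    (hD : IsUnit (aeval A D)) (b : EuclideanSpace ℂ (Fin n)) (hb : b ≠ 0)
    (xk : EuclideanSpace ℂ (Fin n)) (hmem : xk ∈ Krylov n A b k)
    (hmin : ∀ x ∈ Krylov n A b k,
      Snorm n ((aeval A D)ᴴ * aeval A D) ((WithLp.equiv 2 (Fin n → ℂ)).symm (((aeval A D)⁻¹ * aeval A N).mulVec b) - xk)
      ≤ Snorm n ((aeval A D)ᴴ * aeval A D) ((WithLp.equiv 2 (Fin n → ℂ)).symm (((aeval A D)⁻¹ * aeval A N).mulVec b) - x)) :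
    ∀ p : Polynomial ℂ, p.degree < (k : WithBot ℕ) →
      ‖((WithLp.equiv 2 (Fin n → ℂ)).symm (((aeval A D)⁻¹ * aeval A N).mulVec b) - xk : EuclideanSpace ℂ (Fin n))‖ / ‖b‖
      ≤ Real.sqrt (opNorm ((aeval A D)ᴴ * aeval A D) * opNorm (((aeval A D)ᴴ * aeval A D)⁻¹))
        * opNorm ((aeval A D)⁻¹ * aeval A N - aeval A p) :=
  stmt6_general n k A D N hD b xk hmin
end

section
/- Assuming the numerical range W(B) is a (1+√2)-spectral set for every matrix B (i.e. ‖g(B)‖_2 ≤ (1+√2) sup_{z∈W(B)} |g(z)| for rational g with poles off W(B)), the Arnoldi-OR iterate x_k satisfies ‖R(A)b − x_k‖_S / ‖b‖_S ≤ (1+√2) · min over polynomials p of degree ≤ k−1 of max_{z ∈ W(S^{1/2} A S^{-1/2})} |R(z) − p(z)|, provided R is analytic on W(S^{1/2} A S^{-1/2}). -/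
/-- The numerical range `W(A) = {⟨Aq,q⟩ : ‖q‖₂ = 1}`. -/
def numRange (n : ℕ) (A : Matrix (Fin n) (Fin n) ℂ) : Set ℂ :=
  {z | ∃ q : EuclideanSpace ℂ (Fin n), ‖q‖ = 1 ∧
    @inner ℂ (EuclideanSpace ℂ (Fin n)) _ q (WithLp.toLp 2 (A.mulVec q)) = z}

/-!
For a polynomial `p` of degree `< k`, `p(A) b` lies in the Krylov space, so by optimality the
error is at most `‖(R(A) - p(A)) b‖_S`. Writing `S = M²` with `M` Hermitian, `‖v‖_S = ‖M v‖₂`, and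
`M (R(A) - p(A)) b = g(B) (M b)` for `B = M A M⁻¹` and the rational function `g = (N - p D) / D`,
which equals `R - p` on `W(B)`. The Crouzeix–Palencia bound for `g(B)` finishes the estimate.
-/

open Polynomial Matrix

section MatrixPolynomial

variable {ι R : Type*} [Fintype ι] [DecidableEq ι] [CommRing R]

theorem aeval_conj_of_isUnit {M : Matrix ι ι R} (hM : IsUnit M) (A : Matrix ι ι R) (q : R[X]) :
    aeval (M * A * M⁻¹) q = M * aeval A q * M⁻¹ := by
  simpa [ConjAct.units_smul_def] using aeval_algHom_apply
    (MulSemiringAction.toAlgEquiv R (Matrix ι ι R) (ConjAct.toConjAct hM.unit)).toAlgHom A q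

theorem inv_conj_of_isUnit {M : Matrix ι ι R} (hM : IsUnit M) (X : Matrix ι ι R) :
    (M * X * M⁻¹)⁻¹ = M * X⁻¹ * M⁻¹ := by
  rw [Matrix.mul_inv_rev, Matrix.mul_inv_rev, ← mul_assoc,
    nonsing_inv_nonsing_inv M ((isUnit_iff_isUnit_det M).mp hM)]

theorem inv_aeval_mul_aeval_conj_of_isUnit {M : Matrix ι ι R} (hM : IsUnit M)
    (A : Matrix ι ι R) (P Q : R[X]) :
    (aeval (M * A * M⁻¹) Q)⁻¹ * aeval (M * A * M⁻¹) P
      = M * ((aeval A Q)⁻¹ * aeval A P) * M⁻¹ := by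
  rw [aeval_conj_of_isUnit hM, aeval_conj_of_isUnit hM, inv_conj_of_isUnit hM]
  simp only [mul_assoc, (nonsing_inv_mul_cancel_left _ _ ((isUnit_iff_isUnit_det M).mp hM))]

theorem inv_aeval_mul_aeval_sub_aeval {A : Matrix ι ι R} {Q : R[X]} (hQ : IsUnit (aeval A Q))
    (P p : R[X]) :
    (aeval A Q)⁻¹ * aeval A P - aeval A p = (aeval A Q)⁻¹ * aeval A (P - p * Q) := by
  rw [map_sub, map_mul, ((Commute.all p Q).map (aeval A)).eq, mul_sub,
    nonsing_inv_mul_cancel_left _ _ ((isUnit_iff_isUnit_det _).mp hQ)]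

end MatrixPolynomial

theorem toLp_aeval_mulVec_mem_Krylov {n k : ℕ} (A : Matrix (Fin n) (Fin n) ℂ)
    (b : EuclideanSpace ℂ (Fin n)) {p : ℂ[X]} (hp : p.degree < k) :
    WithLp.toLp 2 (aeval A p *ᵥ b) ∈ Krylov n A b k := by
  rcases eq_or_ne p 0 with rfl | hp0
  · simp
  rw [aeval_eq_sum_range' ((natDegree_lt_iff_degree_lt hp0).mpr hp), Matrix.sum_mulVec,
    WithLp.toLp_sum]
  refine Submodule.sum_mem _ fun i hi => ?_
  rw [smul_mulVec, WithLp.toLp_smul]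
  exact Submodule.smul_mem _ _ (Submodule.subset_span ⟨i, Finset.mem_range.mp hi, rfl⟩)

theorem Snorm_mul_self_eq_norm {n : ℕ} {M : Matrix (Fin n) (Fin n) ℂ} (hM : M.IsHermitian)
    (v : EuclideanSpace ℂ (Fin n)) :
    Snorm n (M * M) v = ‖WithLp.toLp 2 (M *ᵥ v)‖ := by
  have h : inner ℂ v (WithLp.toLp 2 ((M * M) *ᵥ v))
      = inner ℂ (WithLp.toLp 2 (M *ᵥ v)) (WithLp.toLp 2 (M *ᵥ v)) := by
    simp only [EuclideanSpace.inner_eq_star_dotProduct]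
    rw [← mulVec_mulVec, dotProduct_comm, dotProduct_mulVec, star_mulVec, hM.eq]
    exact dotProduct_comm _ _
  rw [Snorm, h, ← RCLike.re_to_complex, inner_self_eq_norm_sq, Real.sqrt_sq (norm_nonneg _)]

theorem Snorm_mulVec_le {n : ℕ} {M : Matrix (Fin n) (Fin n) ℂ} (hM : M.IsHermitian)
    (hMu : IsUnit M) (E : Matrix (Fin n) (Fin n) ℂ) (v : EuclideanSpace ℂ (Fin n)) :
    Snorm n (M * M) (WithLp.toLp 2 (E *ᵥ v)) ≤ opNorm (M * E * M⁻¹) * Snorm n (M * M) v := by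
  have h : M *ᵥ (E *ᵥ v) = (M * E * M⁻¹) *ᵥ (M *ᵥ v) := by
    rw [mulVec_mulVec, mulVec_mulVec, mul_assoc _ M⁻¹,
      nonsing_inv_mul _ ((isUnit_iff_isUnit_det M).mp hMu), mul_one]
  rw [Snorm_mul_self_eq_norm hM, Snorm_mul_self_eq_norm hM, WithLp.ofLp_toLp, h,
    ← toEuclideanCLM_toLp]
  exact (toEuclideanCLM (𝕜 := ℂ) (M * E * M⁻¹)).le_opNorm _

open Polynomial Matrix ComplexOrder in
theorem stmt10_general (n k : ℕ) (A : Matrix (Fin n) (Fin n) ℂ) (D N : Polynomial ℂ)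
    (hD : IsUnit (aeval A D)) (b : EuclideanSpace ℂ (Fin n))
    (M : Matrix (Fin n) (Fin n) ℂ) (hM : M.PosDef) (hMS : M * M = (aeval A D)ᴴ * aeval A D)
    (xk : EuclideanSpace ℂ (Fin n))
    (hmin : ∀ x ∈ Krylov n A b k,
      Snorm n ((aeval A D)ᴴ * aeval A D)
        ((WithLp.equiv 2 (Fin n → ℂ)).symm (((aeval A D)⁻¹ * aeval A N).mulVec b) - xk)
      ≤ Snorm n ((aeval A D)ᴴ * aeval A D)
        ((WithLp.equiv 2 (Fin n → ℂ)).symm (((aeval A D)⁻¹ * aeval A N).mulVec b) - x))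
    (hCP : ∀ B : Matrix (Fin n) (Fin n) ℂ, ∀ gN gD : Polynomial ℂ,
      (∀ z ∈ numRange n B, gD.eval z ≠ 0) → IsUnit (aeval B gD) →
      opNorm ((aeval B gD)⁻¹ * aeval B gN)
        ≤ (1 + Real.sqrt 2) * sSup ((fun z => ‖gN.eval z / gD.eval z‖) '' numRange n B))
    (hanal : ∀ z ∈ numRange n (M * A * M⁻¹), D.eval z ≠ 0) :
    ∀ p : Polynomial ℂ, p.degree < (k : WithBot ℕ) →
      Snorm n ((aeval A D)ᴴ * aeval A D)
          ((WithLp.equiv 2 (Fin n → ℂ)).symm (((aeval A D)⁻¹ * aeval A N).mulVec b) - xk)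
        / Snorm n ((aeval A D)ᴴ * aeval A D) b
      ≤ (1 + Real.sqrt 2) *
        sSup ((fun z => ‖N.eval z / D.eval z - p.eval z‖)
          '' numRange n (M * A * M⁻¹)) := by
  intro p hp
  have hMu : IsUnit M := hM.isUnit
  have hDB : IsUnit (aeval (M * A * M⁻¹) D) := by
    rw [aeval_conj_of_isUnit hMu]
    exact (hMu.mul hD).mul (isUnit_nonsing_inv_iff.mpr hMu)
  have hsup : (fun z => ‖(N - p * D).eval z / D.eval z‖) '' numRange n (M * A * M⁻¹)
      = (fun z => ‖N.eval z / D.eval z - p.eval z‖) '' numRange n (M * A * M⁻¹) :=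
    Set.image_congr fun z hz => by
      rw [eval_sub, eval_mul, sub_div, mul_div_cancel_right₀ _ (hanal z hz)]
  have hCrouzeix := hCP _ (N - p * D) D hanal hDB
  rw [inv_aeval_mul_aeval_conj_of_isUnit hMu, hsup] at hCrouzeix
  refine div_le_of_le_mul₀ (Real.sqrt_nonneg _) ((norm_nonneg _).trans hCrouzeix) ?_
  rw [← hMS] at hmin ⊢
  calc _ ≤ Snorm n (M * M) (WithLp.toLp 2 (((aeval A D)⁻¹ * aeval A N) *ᵥ b)
          - WithLp.toLp 2 (aeval A p *ᵥ b)) := hmin _ (toLp_aeval_mulVec_mem_Krylov A b hp)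
    _ = Snorm n (M * M) (WithLp.toLp 2 (((aeval A D)⁻¹ * aeval A (N - p * D)) *ᵥ b)) := by
      rw [← inv_aeval_mul_aeval_sub_aeval hD, sub_mulVec, WithLp.toLp_sub]
    _ ≤ opNorm (M * ((aeval A D)⁻¹ * aeval A (N - p * D)) * M⁻¹) * Snorm n (M * M) b :=
      Snorm_mulVec_le hM.1 hMu _ _
    _ ≤ _ := mul_le_mul_of_nonneg_right hCrouzeix (Real.sqrt_nonneg _)

open Polynomial Matrix ComplexOrder in
/-- Assuming the numerical range is a `(1+√2)`-spectral set for every matrix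
(Crouzeix–Palencia), the Arnoldi-OR iterate satisfies
`‖R(A)b − x_k‖_S/‖b‖_S ≤ (1+√2)·min_{deg p ≤ k-1} max_{z ∈ W(S^{1/2}AS^{-1/2})} |R(z) − p(z)|`,
provided `R` is analytic on `W(S^{1/2}AS^{-1/2})`. -/
theorem stmt10 (n k : ℕ) (A : Matrix (Fin n) (Fin n) ℂ) (D N : Polynomial ℂ)
    (hD : IsUnit (aeval A D)) (b : EuclideanSpace ℂ (Fin n)) (hb : b ≠ 0)
    (M : Matrix (Fin n) (Fin n) ℂ) (hM : M.PosDef) (hMS : M * M = (aeval A D)ᴴ * aeval A D)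
    (xk : EuclideanSpace ℂ (Fin n)) (hmem : xk ∈ Krylov n A b k)
    (hmin : ∀ x ∈ Krylov n A b k,
      Snorm n ((aeval A D)ᴴ * aeval A D)
        ((WithLp.equiv 2 (Fin n → ℂ)).symm (((aeval A D)⁻¹ * aeval A N).mulVec b) - xk)
      ≤ Snorm n ((aeval A D)ᴴ * aeval A D)
        ((WithLp.equiv 2 (Fin n → ℂ)).symm (((aeval A D)⁻¹ * aeval A N).mulVec b) - x))
    (hCP : ∀ B : Matrix (Fin n) (Fin n) ℂ, ∀ gN gD : Polynomial ℂ,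
      (∀ z ∈ numRange n B, gD.eval z ≠ 0) → IsUnit (aeval B gD) →
      opNorm ((aeval B gD)⁻¹ * aeval B gN)
        ≤ (1 + Real.sqrt 2) * sSup ((fun z => ‖gN.eval z / gD.eval z‖) '' numRange n B))
    (hanal : ∀ z ∈ numRange n (M * A * M⁻¹), D.eval z ≠ 0) :
    ∀ p : Polynomial ℂ, p.degree < (k : WithBot ℕ) →
      Snorm n ((aeval A D)ᴴ * aeval A D)
          ((WithLp.equiv 2 (Fin n → ℂ)).symm (((aeval A D)⁻¹ * aeval A N).mulVec b) - xk)
        / Snorm n ((aeval A D)ᴴ * aeval A D) b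
      ≤ (1 + Real.sqrt 2) *
        sSup ((fun z => ‖N.eval z / D.eval z - p.eval z‖)
          '' numRange n (M * A * M⁻¹)) :=
  stmt10_general n k A D N hD b M hM hMS xk hmin hCP hanal
end

section
/- Let v_1,...,v_{n-J} be orthonormal vectors in C^n and let φ(0) ≥ ... ≥ φ(n−J) > 0 be given. Then there exists b ∈ C^n with ‖b‖_2 = φ(0) and |⟨b, v_k⟩| = ψ(k) := sqrt(φ(k−1)^2 − φ(k)^2) for all k = 1,...,n−J; moreover any such b is linearly independent of v_1,...,v_{n-J}. -/
/-!
Since `n - J < n` there is a unit vector `w` orthogonal to the `v_k`, so any coefficients `c_k`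
with `∑ |c_k|² ≤ R²` are realised by `b = ∑ c_k v_k + √(R² - ∑ |c_k|²) w`, of norm `R` by
Pythagoras. For `c_k = ψ(k)` the sum telescopes to `φ(0)² - φ(n-J)² < φ(0)²`. Conversely, a
vector in the span of the `v_k` satisfies Parseval, `‖b‖² = ∑ |⟨v_k, b⟩|²`, which that strict
inequality rules out.
-/

open Finset Module Submodule

section Orthonormal

variable {𝕜 E ι : Type*} [RCLike 𝕜] [NormedAddCommGroup E] [InnerProductSpace 𝕜 E] [Fintype ι]
  {v : ι → E}

theorem Orthonormal.norm_sum_smul_sq (hv : Orthonormal 𝕜 v) (c : ι → 𝕜) :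
    ‖∑ i, c i • v i‖ ^ 2 = ∑ i, ‖c i‖ ^ 2 := by
  have h := hv.inner_sum c c univ
  rw [inner_self_eq_norm_sq_to_K] at h
  have : ((‖∑ i, c i • v i‖ ^ 2 : ℝ) : 𝕜) = ((∑ i, ‖c i‖ ^ 2 : ℝ) : 𝕜) := by
    push_cast
    rw [h]
    exact sum_congr rfl fun i _ => RCLike.conj_mul (c i)
  exact_mod_cast this

theorem Orthonormal.norm_sq_eq_sum_of_mem_span (hv : Orthonormal 𝕜 v) {b : E}
    (hb : b ∈ span 𝕜 (Set.range v)) : ‖b‖ ^ 2 = ∑ i, ‖inner 𝕜 (v i) b‖ ^ 2 := by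
  obtain ⟨c, rfl⟩ := (mem_span_range_iff_exists_fun 𝕜).mp hb
  simp only [hv.inner_right_fintype, hv.norm_sum_smul_sq]

theorem Orthonormal.exists_norm_eq_one_forall_inner_eq_zero [FiniteDimensional 𝕜 E]
    (hv : Orthonormal 𝕜 v) (hcard : Fintype.card ι < finrank 𝕜 E) :
    ∃ w : E, ‖w‖ = 1 ∧ ∀ i, inner 𝕜 (v i) w = 0 := by
  have hS : span 𝕜 (Set.range v) ≠ ⊤ := fun h => by
    have := finrank_span_eq_card hv.linearIndependent
    rw [h, finrank_top] at this
    omega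
  obtain ⟨w, hwS, hw⟩ := exists_mem_ne_zero_of_ne_bot (mt orthogonal_eq_bot_iff.mp hS)
  refine ⟨(‖w‖⁻¹ : 𝕜) • w, norm_smul_inv_norm hw, fun i => ?_⟩
  rw [inner_smul_right, inner_right_of_mem_orthogonal (subset_span (Set.mem_range_self i)) hwS,
    mul_zero]

theorem Orthonormal.exists_inner_eq_norm_eq [FiniteDimensional 𝕜 E] (hv : Orthonormal 𝕜 v)
    (hcard : Fintype.card ι < finrank 𝕜 E) (c : ι → 𝕜) {R : ℝ} (hR : 0 ≤ R)
    (hc : ∑ i, ‖c i‖ ^ 2 ≤ R ^ 2) :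
    ∃ b : E, (∀ i, inner 𝕜 (v i) b = c i) ∧ ‖b‖ = R := by
  obtain ⟨w, hw, hvw⟩ := hv.exists_norm_eq_one_forall_inner_eq_zero hcard
  set r := √(R ^ 2 - ∑ i, ‖c i‖ ^ 2)
  set x := ∑ i, c i • v i
  have hxw : inner 𝕜 x ((r : 𝕜) • w) = 0 := by
    simp only [x, sum_inner, inner_smul_left, inner_smul_right, hvw, mul_zero, sum_const_zero]
  refine ⟨x + (r : 𝕜) • w, fun i => ?_, ?_⟩
  · simp only [x, inner_add_right, hv.inner_right_fintype, inner_smul_right, hvw, mul_zero,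
      add_zero]
  · have hr : r ^ 2 = R ^ 2 - ∑ i, ‖c i‖ ^ 2 := Real.sq_sqrt (sub_nonneg.mpr hc)
    rw [← sq_eq_sq₀ (norm_nonneg _) hR, sq,
      norm_add_sq_eq_norm_sq_add_norm_sq_of_inner_eq_zero _ _ hxw, ← sq, ← sq,
      hv.norm_sum_smul_sq, norm_smul, hw, mul_one, RCLike.norm_ofReal, sq_abs, hr]
    ring

end Orthonormal

theorem antitoneOn_Iic_of_succ_le {α : Type*} [Preorder α] {φ : ℕ → α} {m : ℕ}
    (hφ : ∀ k < m, φ (k + 1) ≤ φ k) : AntitoneOn φ (Set.Iic m) :=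
  antitoneOn_of_succ_le Set.ordConnected_Iic fun k _ _ hk => by
    rw [Order.succ_eq_add_one] at hk ⊢
    exact hφ k hk

theorem sum_sq_sqrt_sq_sub_sq_succ {φ : ℕ → ℝ} {m : ℕ} (hφ : AntitoneOn φ (Set.Iic m))
    (hm : 0 ≤ φ m) : ∑ k : Fin m, √(φ k ^ 2 - φ (k + 1) ^ 2) ^ 2 = φ 0 ^ 2 - φ m ^ 2 := by
  rw [← sum_range_sub' (fun k => φ k ^ 2), ← Fin.sum_univ_eq_sum_range]
  refine sum_congr rfl fun k _ => Real.sq_sqrt (sub_nonneg.mpr ?_)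
  have hk : (k : ℕ) + 1 ≤ m := k.isLt
  have hsucc := hφ (Set.mem_Iic.mpr (by omega)) (Set.mem_Iic.mpr hk) (Nat.le_succ k)
  exact pow_le_pow_left₀ (hm.trans (hφ (Set.mem_Iic.mpr hk) (Set.mem_Iic.mpr le_rfl) hk)) hsucc 2

/-- Given orthonormal `v_1,...,v_{n-J}` and a nonincreasing sequence
`φ(0) ≥ ... ≥ φ(n−J) > 0`, there exists `b` with `‖b‖₂ = φ(0)` and
`|⟨b,v_k⟩| = ψ(k) = sqrt(φ(k−1)² − φ(k)²)` for all `k`; any such `b` is linearly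
independent of `v_1,...,v_{n-J}`. -/
theorem stmt13 (n J : ℕ) (hJ : 1 ≤ J) (hn : J < n)
    (v : Fin (n - J) → EuclideanSpace ℂ (Fin n)) (hv : Orthonormal ℂ v)
    (φ : ℕ → ℝ) (hmono : ∀ k, k < n - J → φ (k + 1) ≤ φ k) (hpos : 0 < φ (n - J)) :
    (∃ b : EuclideanSpace ℂ (Fin n), ‖b‖ = φ 0 ∧
      ∀ j : Fin (n - J),
        ‖(@inner ℂ _ _ (v j) b)‖ = Real.sqrt (φ (j : ℕ) ^ 2 - φ ((j : ℕ) + 1) ^ 2)) ∧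
    (∀ b : EuclideanSpace ℂ (Fin n), (‖b‖ = φ 0 ∧
      ∀ j : Fin (n - J),
        ‖(@inner ℂ _ _ (v j) b)‖ = Real.sqrt (φ (j : ℕ) ^ 2 - φ ((j : ℕ) + 1) ^ 2)) →
      b ∉ Submodule.span ℂ (Set.range v)) := by
  have hanti := antitoneOn_Iic_of_succ_le hmono
  have hsum := sum_sq_sqrt_sq_sub_sq_succ hanti hpos.le
  have hφ0 : 0 ≤ φ 0 :=
    hpos.le.trans (hanti (Set.mem_Iic.mpr (Nat.zero_le _)) (Set.mem_Iic.mpr le_rfl) (Nat.zero_le _))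
  have hcard : Fintype.card (Fin (n - J)) < finrank ℂ (EuclideanSpace ℂ (Fin n)) := by
    simp only [Fintype.card_fin, finrank_euclideanSpace_fin]
    omega
  refine ⟨?_, fun b ⟨hb, hinner⟩ hspan => ?_⟩
  · obtain ⟨b, hinner, hb⟩ := hv.exists_inner_eq_norm_eq hcard
      (fun j => (√(φ j ^ 2 - φ (j + 1) ^ 2) : ℂ)) hφ0 (by
        simp only [Complex.norm_real, Real.norm_eq_abs, sq_abs, hsum]
        exact sub_le_self _ (sq_nonneg _))
    refine ⟨b, hb, fun j => ?_⟩
    rw [hinner, Complex.norm_real, Real.norm_of_nonneg (Real.sqrt_nonneg _)]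
  · have hparseval := hv.norm_sq_eq_sum_of_mem_span hspan
    simp only [hb, hinner, hsum] at hparseval
    linarith [pow_pos hpos 2]
end

section
/- Any (n−1)×(n−1) upper Hessenberg matrix with 1's on its subdiagonal can be extended to an n×n upper Hessenberg matrix with 1's on its subdiagonal having any prescribed characteristic polynomial (equivalently, any prescribed multiset of n eigenvalues), by suitable choice of the last column. -/
open Polynomial Matrix

private lemma auxdet (m : ℕ) :
    ∀ (V : Matrix (Fin (m+1)) (Fin (m+1)) ℂ),
    (∀ i j : Fin (m+1), (j : ℕ) + 1 < (i : ℕ) → V i j = 0) →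
    (∀ i j : Fin (m+1), (i : ℕ) = (j : ℕ) + 1 → V i j = 1) →
    ∀ p : Polynomial ℂ, p.degree < ((m + 1 : ℕ) : WithBot ℕ) →
    ∃ β : Fin (m+1) → ℂ,
      (Matrix.of fun i j => if j = Fin.last m then C (β i) else charmatrix V i j).det = p := by
  induction m with
  | zero =>
    intro V _ _ p hp
    refine ⟨fun _ => p.coeff 0, ?_⟩
    rw [Matrix.det_fin_one]
    have h0 : p.degree ≤ 0 := by
      have h1 : p.degree < (1 : WithBot ℕ) := by exact_mod_cast hp
      exact Nat.WithBot.lt_one_iff_le_zero.mp h1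
    simp [Matrix.of_apply, (Polynomial.eq_C_of_degree_le_zero h0).symm]
  | succ m ih =>
    intro V hH hS p hp
    set V' : Matrix (Fin (m+1)) (Fin (m+1)) ℂ := V.submatrix Fin.castSucc Fin.castSucc with hV'
    have hH' : ∀ i j : Fin (m+1), (j : ℕ) + 1 < (i : ℕ) → V' i j = 0 := by
      intro i j h; exact hH _ _ (by simpa using h)
    have hS' : ∀ i j : Fin (m+1), (i : ℕ) = (j : ℕ) + 1 → V' i j = 1 := by
      intro i j h; exact hS _ _ (by simpa using h)
    have hmon : (Matrix.charpoly V').Monic := Matrix.charpoly_monic V'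
    have hdeg' : (Matrix.charpoly V').natDegree = m + 1 := by
      rw [Matrix.charpoly_natDegree_eq_dim, Fintype.card_fin]
    set b := p.coeff (m+1) with hb
    have hdeg2 : (p - C b * Matrix.charpoly V').degree < ((m + 1 : ℕ) : WithBot ℕ) := by
      rw [Polynomial.degree_lt_iff_coeff_zero]
      intro k hk
      have hk' : m + 1 ≤ k := by exact_mod_cast hk
      rw [coeff_sub, coeff_C_mul]
      rcases eq_or_lt_of_le hk' with h | h
      · have hc := hmon.coeff_natDegree
        rw [hdeg'] at hc
        rw [← h, hc, mul_one, hb, sub_self]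
      · have h1 : p.coeff k = 0 := by
          have := (Polynomial.degree_lt_iff_coeff_zero p (m+2)).mp hp k (by exact_mod_cast h)
          exact this
        have h2 : (Matrix.charpoly V').coeff k = 0 :=
          Polynomial.coeff_eq_zero_of_natDegree_lt (by omega)
        rw [h1, h2, mul_zero, sub_zero]
    obtain ⟨β', hβ'⟩ := ih V' hH' hS' _ hdeg2
    refine ⟨Fin.snoc β' b, ?_⟩
    set N : Matrix (Fin (m+2)) (Fin (m+2)) ℂ[X] :=
      Matrix.of fun i j => if j = Fin.last (m+1) then C ((Fin.snoc β' b : Fin (m+2) → ℂ) i) else charmatrix V i j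
      with hN
    set j₀ : Fin (m+2) := (Fin.last m).castSucc with hj₀
    have hj₀ne : j₀ ≠ Fin.last (m+1) := by
      simp [hj₀, Fin.ext_iff]
    have hlastne : ∀ j : Fin (m+2), j ≠ Fin.last (m+1) → (Fin.last (m+1) : Fin (m+2)) ≠ j := by
      intro j h; exact fun hc => h hc.symm
    rw [Matrix.det_succ_row N (Fin.last (m+1))]
    have hzero : ∀ j : Fin (m+2), j ≠ j₀ → j ≠ Fin.last (m+1) →
        (-1 : ℂ[X]) ^ ((Fin.last (m+1) : ℕ) + j) * N (Fin.last (m+1)) j *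
          (N.submatrix (Fin.last (m+1)).succAbove j.succAbove).det = 0 := by
      intro j h1 h2
      have hjlt : (j : ℕ) < m := by
        have := j.isLt
        have h1' : (j : ℕ) ≠ m := fun hc => h1 (Fin.ext (by simp [hj₀, hc]))
        have h2' : (j : ℕ) ≠ m + 1 := fun hc => h2 (Fin.ext (by simp [hc]))
        omega
      have : N (Fin.last (m+1)) j = 0 := by
        rw [hN]
        simp only [Matrix.of_apply, if_neg (hlastne j h2).symm]
        rw [charmatrix_apply_ne _ _ _ (by simp [Fin.ext_iff]; omega),
          hH (Fin.last (m+1)) j (by simp; omega)]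
        simp
      rw [this, mul_zero, zero_mul]
    rw [Finset.sum_eq_add_sum_sdiff_singleton_of_mem (Finset.mem_univ (Fin.last (m+1))),
      Finset.sum_eq_single_of_mem j₀ (by simp [hj₀ne]) (by
        intro j hj hne
        exact hzero j hne (by simpa using (Finset.mem_sdiff.mp hj).2))]
    -- term at last
    have hterm_last : (-1 : ℂ[X]) ^ ((Fin.last (m+1) : ℕ) + (Fin.last (m+1) : ℕ)) *
        N (Fin.last (m+1)) (Fin.last (m+1)) *
        (N.submatrix (Fin.last (m+1)).succAbove (Fin.last (m+1)).succAbove).det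
        = C b * Matrix.charpoly V' := by
      have h1 : N (Fin.last (m+1)) (Fin.last (m+1)) = C b := by
        simp [hN, Fin.snoc_last]
      have h2 : N.submatrix (Fin.last (m+1)).succAbove (Fin.last (m+1)).succAbove
          = charmatrix V' := by
        ext i j
        simp only [Matrix.submatrix_apply, Fin.succAbove_last]
        rw [hN]
        simp only [Matrix.of_apply, if_neg (Fin.castSucc_lt_last j).ne]
        rcases eq_or_ne i j with rfl | hij
        · rw [charmatrix_apply_eq, charmatrix_apply_eq, hV']
          simp
        · rw [charmatrix_apply_ne _ _ _ (by simpa using hij), charmatrix_apply_ne _ _ _ hij, hV']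
          simp
      rw [h1, h2, ← Matrix.charpoly]
      have : Even ((Fin.last (m+1) : ℕ) + (Fin.last (m+1) : ℕ)) := ⟨m+1, by simp⟩
      rw [this.neg_one_pow, one_mul]
    -- term at j₀
    have hterm_j₀ : (-1 : ℂ[X]) ^ ((Fin.last (m+1) : ℕ) + (j₀ : ℕ)) *
        N (Fin.last (m+1)) j₀ *
        (N.submatrix (Fin.last (m+1)).succAbove j₀.succAbove).det
        = p - C b * Matrix.charpoly V' := by
      have h1 : N (Fin.last (m+1)) j₀ = -1 := by
        rw [hN]
        simp only [Matrix.of_apply, if_neg hj₀ne]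
        rw [charmatrix_apply_ne _ _ _ (by simp [hj₀, Fin.ext_iff]),
          hS (Fin.last (m+1)) j₀ (by simp [hj₀])]
        simp
      have h2 : N.submatrix (Fin.last (m+1)).succAbove j₀.succAbove
          = Matrix.of fun i j => if j = Fin.last m then C (β' i) else charmatrix V' i j := by
        ext i j
        simp only [Matrix.submatrix_apply, Fin.succAbove_last, Matrix.of_apply]
        rcases eq_or_ne j (Fin.last m) with rfl | hj
        · have : j₀.succAbove (Fin.last m) = Fin.last (m+1) := by
            rw [Fin.succAbove]
            simp [hj₀]
          rw [this, hN]
          simp [Fin.snoc_castSucc]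
        · have hjlt : (j : ℕ) < m := by
            have := j.isLt; have : (j:ℕ) ≠ m := fun hc => hj (Fin.ext hc); omega
          have : j₀.succAbove j = j.castSucc := by
            rw [Fin.succAbove, if_pos (by simp [hj₀, Fin.lt_def, hjlt])]
          rw [this, hN]
          simp only [Matrix.of_apply, if_neg (Fin.castSucc_lt_last _).ne, if_neg hj]
          rcases eq_or_ne i j with rfl | hij
          · rw [charmatrix_apply_eq, charmatrix_apply_eq, hV']; simp
          · rw [charmatrix_apply_ne _ _ _ (by simpa using hij),
              charmatrix_apply_ne _ _ _ hij, hV']; simp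
      have hodd : Odd ((Fin.last (m+1) : ℕ) + (j₀ : ℕ)) := by
        refine ⟨m, ?_⟩
        simp [hj₀]
        omega
      rw [h1, h2, hβ', hodd.neg_one_pow]
      ring
    rw [hterm_last, hterm_j₀]
    ring

open Polynomial in
/-- Any `(n−1)×(n−1)` upper Hessenberg matrix with `1`'s on its subdiagonal can be extended,
by suitable choice of the last column, to an `n×n` upper Hessenberg matrix with `1`'s on its
subdiagonal having any prescribed monic characteristic polynomial of degree `n`. -/
theorem stmt14 (n : ℕ) (hn : 1 ≤ n) (H' : Matrix (Fin (n - 1)) (Fin (n - 1)) ℂ)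
    (hHess : ∀ i l : Fin (n - 1), (l : ℕ) + 1 < (i : ℕ) → H' i l = 0)
    (hsub : ∀ i j : Fin (n - 1), (i : ℕ) = (j : ℕ) + 1 → H' i j = 1)
    (q : Polynomial ℂ) (hq : q.Monic) (hdeg : q.natDegree = n) :
    ∃ β : Fin n → ℂ,
      Matrix.charpoly (Matrix.of fun i j : Fin n =>
        if hj : (j : ℕ) < n - 1 then
          (if hi : (i : ℕ) < n - 1 then H' ⟨i, hi⟩ ⟨j, hj⟩
           else if (i : ℕ) = (j : ℕ) + 1 then 1 else 0)
        else β i) = q := by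
  obtain ⟨m, rfl⟩ : ∃ m, n = m + 1 := ⟨n - 1, (Nat.succ_pred_eq_of_pos hn).symm⟩
  set V : Matrix (Fin (m+1)) (Fin (m+1)) ℂ := Matrix.of fun i j =>
    (if hj : (j : ℕ) < m + 1 - 1 then
      (if hi : (i : ℕ) < m + 1 - 1 then H' ⟨i, hi⟩ ⟨j, hj⟩
       else if (i : ℕ) = (j : ℕ) + 1 then 1 else 0)
    else 0) with hV
  have hV1 : ∀ i j : Fin (m+1), (j : ℕ) + 1 < (i : ℕ) → V i j = 0 := by
    intro i j h
    simp only [hV, Matrix.of_apply]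
    split_ifs with hj hi hie
    · exact hHess _ _ h
    · exact absurd hie (by omega)
    · rfl
    · rfl
  have hV2 : ∀ i j : Fin (m+1), (i : ℕ) = (j : ℕ) + 1 → V i j = 1 := by
    intro i j h
    have hj : (j : ℕ) < m + 1 - 1 := by have := i.isLt; omega
    simp only [hV, Matrix.of_apply, dif_pos hj]
    split_ifs with hi
    · exact hsub _ _ h
    · rfl
  have hmon : (Matrix.charpoly V).Monic := Matrix.charpoly_monic V
  have hd : (Matrix.charpoly V).natDegree = m + 1 := by
    rw [Matrix.charpoly_natDegree_eq_dim, Fintype.card_fin]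
  have h1 : q.degree = ((m + 1 : ℕ) : WithBot ℕ) := by
    rw [Polynomial.degree_eq_natDegree hq.ne_zero, hdeg]
  have hlt : (q - Matrix.charpoly V).degree < ((m + 1 : ℕ) : WithBot ℕ) := by
    have hdq : q.degree = (Matrix.charpoly V).degree := by
      rw [h1, Polynomial.degree_eq_natDegree hmon.ne_zero, hd]
    have hlc : q.leadingCoeff = (Matrix.charpoly V).leadingCoeff := by
      rw [hq.leadingCoeff, hmon.leadingCoeff]
    have h2 := Polynomial.degree_sub_lt hdq hq.ne_zero hlc
    rwa [h1] at h2
  obtain ⟨γ, hγ⟩ := auxdet m V hV1 hV2 _ hlt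
  refine ⟨fun i => -γ i, ?_⟩
  set Mβ : Matrix (Fin (m+1)) (Fin (m+1)) ℂ := Matrix.of (fun i j : Fin (m+1) =>
        if hj : (j : ℕ) < m + 1 - 1 then
          (if hi : (i : ℕ) < m + 1 - 1 then H' ⟨i, hi⟩ ⟨j, hj⟩
           else if (i : ℕ) = (j : ℕ) + 1 then 1 else 0)
        else -γ i) with hM
  have hMV : ∀ i j : Fin (m+1), j ≠ Fin.last m → Mβ i j = V i j := by
    intro i j hj
    have hjl : (j : ℕ) < m + 1 - 1 := by
      have := j.isLt
      have : (j : ℕ) ≠ m := fun hc => hj (Fin.ext (by simp [hc]))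
      omega
    simp only [hM, hV, Matrix.of_apply, dif_pos hjl]
  have hlastn : ¬ ((Fin.last m : ℕ) < m + 1 - 1) := by simp
  have hch : charmatrix Mβ = (charmatrix V).updateCol (Fin.last m)
      (fun i => charmatrix V i (Fin.last m) + C (γ i)) := by
    ext i j
    rcases eq_or_ne j (Fin.last m) with rfl | hj
    · rw [Matrix.updateCol_apply, if_pos rfl]
      rw [Matrix.charmatrix_apply, Matrix.charmatrix_apply]
      simp only [hM, hV, Matrix.of_apply, dif_neg hlastn]
      simp only [map_neg, map_zero, sub_neg_eq_add, sub_zero]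
    · rw [Matrix.updateCol_apply, if_neg hj, Matrix.charmatrix_apply,
        Matrix.charmatrix_apply, hMV i j hj]
  rw [Matrix.charpoly, hch,
    show (fun i => charmatrix V i (Fin.last m) + C (γ i)) =
      (fun i => charmatrix V i (Fin.last m)) + (fun i => C (γ i)) from rfl,
    Matrix.det_updateCol_add, Matrix.updateCol_eq_self]
  have h2 : (charmatrix V).updateCol (Fin.last m) (fun i => C (γ i)) =
      Matrix.of fun i j => if j = Fin.last m then C (γ i) else charmatrix V i j := by
    ext i j
    rw [Matrix.updateCol_apply, Matrix.of_apply]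
  rw [h2, hγ, ← Matrix.charpoly]
  ring
end
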